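/- arXiv:1504.01986 — 8 statements merged into one kernel-verified Lean document; each statement's English description precedes it below -/
import Mathlib

section
/- Let M be an (n+1)×(p+1) matrix over a field F, written in block form M = [[A, C], [B, d]] where A is the top-left n×p block, C is an n×1 column, B is a 1×p row, and d is a scalar. If rank(M) ≤ r and rank(M + E) ≤ r, where E is the matrix with 1 in the bottom-right entry and 0 elsewhere, then rank(A) ≤ r − 1. -/
/-!
Let `V` be the span of the first `p` columns of `M`, which are also those of `M + E`.
If `eₙ₊₁ ∈ V`, deleting the last row kills a nonzero vector of `V`, so `rank A < dim V ≤ r`.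
Otherwise the last columns of `M` and `M + E`, which differ by `eₙ₊₁`, cannot both lie in `V`,
so `dim V` is strictly smaller than the rank of `M` or of `M + E`, and `rank A ≤ dim V < r`.
-/

open Module Submodule

theorem Submodule.finrank_map_lt_of_mem_ker {K E E' : Type*} [DivisionRing K]
    [AddCommGroup E] [Module K E] [AddCommGroup E'] [Module K E'] {V : Submodule K E}
    [FiniteDimensional K V] {f : E →ₗ[K] E'} {x : E} (hxV : x ∈ V) (hx : x ≠ 0) (hfx : f x = 0) :
    finrank K (V.map f) < finrank K V := by
  have hker : LinearMap.ker (f.domRestrict V) ≠ ⊥ :=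
    (Submodule.ne_bot_iff _).2 ⟨⟨x, hxV⟩, hfx, by simpa using hx⟩
  have hpos : 0 < finrank K (LinearMap.ker (f.domRestrict V)) :=
    Submodule.one_le_finrank_iff.2 hker
  rw [← LinearMap.range_domRestrict]
  have := (f.domRestrict V).finrank_range_add_finrank_ker
  omega

namespace Matrix

variable {F m m' n n' : Type*} [Field F] [Fintype m] [Fintype n]

theorem rank_submatrix_lt_of_single_mem_span_col [DecidableEq m] (N : Matrix m n F)
    (f : m' → m) {i : m} (hi : i ∉ Set.range f) (h : Pi.single i 1 ∈ span F (Set.range N.col)) :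
    (N.submatrix f id).rank < N.rank := by
  have hrange : span F (Set.range (N.submatrix f id).col) =
      (span F (Set.range N.col)).map (LinearMap.funLeft F F f) := by
    rw [← range_mulVecLin, ← range_mulVecLin, ← LinearMap.range_comp]
    rfl
  rw [rank_eq_finrank_span_cols, rank_eq_finrank_span_cols, hrange]
  refine Submodule.finrank_map_lt_of_mem_ker h (by simp) ?_
  ext j
  exact Pi.single_eq_of_ne (fun hj => hi ⟨j, hj⟩) 1

theorem rank_submatrix_lt_of_col_notMem_span [Fintype n'] (N : Matrix m n F) (g : n' → n) {j : n}
    (h : N.col j ∉ span F (Set.range (N.submatrix id g).col)) :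
    (N.submatrix id g).rank < N.rank := by
  rw [rank_eq_finrank_span_cols, rank_eq_finrank_span_cols]
  refine Submodule.finrank_lt_finrank_of_lt (SetLike.lt_iff_le_and_exists.2 ⟨?_, N.col j, ?_, h⟩)
  · exact span_mono (Set.range_comp_subset_range g N.col)
  · exact subset_span ⟨j, rfl⟩

end Matrix

theorem extraction_lemma_general (F : Type*) [Field F] (n p r : ℕ)
    (M : Matrix (Fin (n + 1)) (Fin (p + 1)) F)
    (h1 : M.rank ≤ r)
    (h2 : (M + Matrix.single (Fin.last n) (Fin.last p) 1).rank ≤ r) :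
    (M.submatrix Fin.castSucc Fin.castSucc).rank ≤ r - 1 := by
  set E : Matrix (Fin (n + 1)) (Fin (p + 1)) F := Matrix.single (Fin.last n) (Fin.last p) 1
  set M' := M.submatrix id Fin.castSucc
  have hA : (M.submatrix Fin.castSucc Fin.castSucc).rank ≤ M'.rank :=
    M'.rank_submatrix_le Fin.castSucc id
  have hM' : M'.rank ≤ M.rank := M.rank_submatrix_le id Fin.castSucc
  by_cases he : Pi.single (Fin.last n) 1 ∈ span F (Set.range M'.col)
  · have : (M.submatrix Fin.castSucc Fin.castSucc).rank < M'.rank :=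
      M'.rank_submatrix_lt_of_single_mem_span_col Fin.castSucc (by simp) he
    omega
  have hE' : (M + E).submatrix id Fin.castSucc = M' := by
    ext i j
    simp [E, M', (Fin.castSucc_lt_last j).ne']
  have hcol : (M + E).col (Fin.last p) - M.col (Fin.last p) = Pi.single (Fin.last n) 1 := by
    ext i
    simp [E, Matrix.single_apply, Pi.single_apply, eq_comm]
  have hlast : M.col (Fin.last p) ∉ span F (Set.range M'.col) ∨
      (M + E).col (Fin.last p) ∉ span F (Set.range M'.col) := by
    by_contra! h
    exact he (hcol ▸ sub_mem h.2 h.1)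
  rcases hlast with hM | hME
  · have : M'.rank < M.rank := M.rank_submatrix_lt_of_col_notMem_span Fin.castSucc hM
    omega
  · have := (M + E).rank_submatrix_lt_of_col_notMem_span Fin.castSucc (by rwa [hE'])
    rw [hE'] at this
    omega

/-- Extraction lemma: if `M` and `M + E_{n+1,p+1}` both have rank at most `r`,
then the top-left `n × p` block of `M` has rank at most `r - 1`. -/
theorem extraction_lemma (F : Type*) [Field F] (n p r : ℕ) (hr : 1 ≤ r)
    (M : Matrix (Fin (n + 1)) (Fin (p + 1)) F)
    (h1 : M.rank ≤ r)
    (h2 : (M + Matrix.single (Fin.last n) (Fin.last p) 1).rank ≤ r) :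
    (M.submatrix Fin.castSucc Fin.castSucc).rank ≤ r - 1 :=
  extraction_lemma_general F n p r M h1 h2
end

section
/- Let F be a field, n ≥ 2 and p ≥ 1, and let Φ : Mat_{n,p}(F) → F^n be an additive map such that Φ(M) lies in the column space of M for every matrix M. Then there exists a vector X ∈ F^p such that Φ(M) = MX for all M. -/
/-!
Range compatibility applied to `single i j a` forces `Φ (single i j a)` to be supported on row `i`,
and applied to `single i j a + single k j 1` for a second row `k ≠ i` it forces the `i`-th entry to
be `a` times the `k`-th entry of `Φ (single k j 1)`, the two columns being proportional to the
same `v j`. Hence `Φ (single i j a) = single i j a *ᵥ X` with `X j` the common diagonal value of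
`Φ (single · j 1)`, and additivity extends this to every matrix.
-/

namespace Matrix

variable {R m n : Type*}

def IsRangeCompatible [Semiring R] [Fintype n] (Φ : Matrix m n R → m → R) : Prop :=
  ∀ M, ∃ v, M *ᵥ v = Φ M

namespace IsRangeCompatible

variable [Semiring R] [Fintype n] [DecidableEq m] [DecidableEq n]
  {Φ : Matrix m n R →+ m → R} (hΦ : IsRangeCompatible Φ)
include hΦ

theorem apply_single_of_ne {i r : m} (hr : r ≠ i) (j : n) (a : R) : Φ (single i j a) r = 0 := by
  obtain ⟨v, hv⟩ := hΦ (single i j a)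
  rw [← hv, single_mulVec, Function.update_of_ne hr, Pi.zero_apply]

theorem apply_single_self_eq_mul {i k : m} (hk : k ≠ i) (j : n) (a : R) :
    Φ (single i j a) i = a * Φ (single k j 1) k := by
  obtain ⟨v, hv⟩ := hΦ (single i j a + single k j 1)
  have hvi := congrFun hv i
  have hvk := congrFun hv k
  simp only [map_add, add_mulVec, single_mulVec, Pi.add_apply, Function.update_self,
    Function.update_of_ne hk, Function.update_of_ne hk.symm, hΦ.apply_single_of_ne hk,
    hΦ.apply_single_of_ne hk.symm, Pi.zero_apply, add_zero, zero_add, one_mul] at hvi hvk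
  rw [← hvi, ← hvk]

theorem apply_single_one_self_eq (i k : m) (j : n) :
    Φ (single i j 1) i = Φ (single k j 1) k := by
  rcases eq_or_ne k i with rfl | hk
  · rfl
  · rw [hΦ.apply_single_self_eq_mul hk, one_mul]

theorem apply_single_eq_mulVec [Nontrivial m] (i₀ i : m) (j : n) (a : R) :
    Φ (single i j a) = single i j a *ᵥ fun j ↦ Φ (single i₀ j 1) i₀ := by
  ext r
  rw [single_mulVec]
  rcases eq_or_ne r i with rfl | hr
  · obtain ⟨k, hk⟩ := exists_ne r
    rw [hΦ.apply_single_self_eq_mul hk, hΦ.apply_single_one_self_eq k i₀, Function.update_self]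
  · rw [hΦ.apply_single_of_ne hr, Function.update_of_ne hr, Pi.zero_apply]

theorem exists_eq_mulVec [Finite m] [Nontrivial m] : ∃ X : n → R, ∀ M, Φ M = M *ᵥ X := by
  obtain ⟨i₀⟩ := (inferInstance : Nonempty m)
  refine ⟨_, fun M ↦ M.induction_on' ?_ ?_ (hΦ.apply_single_eq_mulVec i₀)⟩
  · rw [map_zero, zero_mulVec]
  · intro A B hA hB
    rw [map_add, hA, hB, add_mulVec]

end IsRangeCompatible

end Matrix

theorem additive_range_compatible_is_mulVec_general (F : Type*) [Field F] (n p : ℕ)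
    (hn : 2 ≤ n)
    (Φ : Matrix (Fin n) (Fin p) F → (Fin n → F))
    (hadd : ∀ M N, Φ (M + N) = Φ M + Φ N)
    (hrc : ∀ M, Φ M ∈ LinearMap.range M.mulVecLin) :
    ∃ X : Fin p → F, ∀ M, Φ M = M.mulVec X := by
  have : Nontrivial (Fin n) := Fin.nontrivial_iff_two_le.mpr hn
  have hΦ : Matrix.IsRangeCompatible (AddMonoidHom.mk' Φ hadd) := fun M ↦ hrc M
  exact hΦ.exists_eq_mulVec

/-- An additive range-compatible map `Φ : Mat_{n,p}(F) → F^n` with `n ≥ 2`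
is of the form `M ↦ M X` for some fixed vector `X`. -/
theorem additive_range_compatible_is_mulVec (F : Type*) [Field F] (n p : ℕ)
    (hn : 2 ≤ n) (hp : 1 ≤ p)
    (Φ : Matrix (Fin n) (Fin p) F → (Fin n → F))
    (hadd : ∀ M N, Φ (M + N) = Φ M + Φ N)
    (hrc : ∀ M, Φ M ∈ LinearMap.range M.mulVecLin) :
    ∃ X : Fin p → F, ∀ M, Φ M = M.mulVec X :=
  additive_range_compatible_is_mulVec_general F n p hn Φ hadd hrc
end

section
/- Let F be a field and let Φ : Mat_{n,p}(F) → F^n be an additive range-compatible map (i.e. Φ(M) ∈ im M for all M). If n ≥ 2, then Φ is F-linear. -/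
/-!
An additive map `f : V → V` sending every vector into its own line, `f x = c_x • x`, has the
same scalar `c_x = c_y` on any linearly independent pair: compare `f (x + y)` with
`f x + f y`. When `dim V ≥ 2`, every nonzero `x` and `t • x` have a common independent partner,
so `c_{t • x} = c_x` and `f` is homogeneous. A range-compatible `Φ`, restricted to the matrices
supported on column `j`, is such a map on `F^n`; summing over the columns gives `F`-linearity.
-/

open Submodule

section LocalScalar

variable {K V : Type*} [Field K] [AddCommGroup V] [Module K V]

theorem AddMonoidHom.eq_of_linearIndependent_of_forall_mem_span_singleton (f : V →+ V)
    (hf : ∀ v, f v ∈ K ∙ v) {x y : V} (hxy : LinearIndependent K ![x, y]) {a b : K}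
    (ha : f x = a • x) (hb : f y = b • y) : a = b := by
  obtain ⟨c, hc⟩ := mem_span_singleton.mp (hf (x + y))
  have hsum : (a - c) • x + (b - c) • y = 0 := by
    rw [sub_smul, sub_smul, ← ha, ← hb, sub_add_sub_comm, ← map_add, ← hc, smul_add,
      sub_self]
  obtain ⟨hac, hbc⟩ := LinearIndependent.pair_iff.mp hxy _ _ hsum
  exact (sub_eq_zero.mp hac).trans (sub_eq_zero.mp hbc).symm

theorem AddMonoidHom.map_smul_of_forall_mem_span_singleton (hV : 1 < Module.rank K V)
    (f : V →+ V) (hf : ∀ v, f v ∈ K ∙ v) (t : K) (x : V) : f (t • x) = t • f x := by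
  rcases eq_or_ne t 0 with rfl | ht
  · simp
  rcases eq_or_ne x 0 with rfl | hx
  · simp
  obtain ⟨y, hxy⟩ := exists_linearIndependent_pair_of_one_lt_rank hV hx
  have htxy : LinearIndependent K ![t • x, y] := by
    refine (LinearIndependent.pair_iff' (smul_ne_zero ht hx)).mpr fun a => ?_
    rw [smul_smul]
    exact (LinearIndependent.pair_iff' hx).mp hxy (a * t)
  obtain ⟨a, ha⟩ := mem_span_singleton.mp (hf x)
  obtain ⟨a', ha'⟩ := mem_span_singleton.mp (hf (t • x))
  obtain ⟨b, hb⟩ := mem_span_singleton.mp (hf y)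
  have hab := f.eq_of_linearIndependent_of_forall_mem_span_singleton hf hxy ha.symm hb.symm
  have ha'b := f.eq_of_linearIndependent_of_forall_mem_span_singleton hf htxy ha'.symm hb.symm
  rw [← ha, ← ha', ha'b, ← hab, smul_comm]

end LocalScalar

namespace Matrix

variable {m p R : Type*}

theorem range_mulVecLin_vecMulVec_le [Fintype p] [CommSemiring R] (x : m → R) (w : p → R) :
    LinearMap.range (vecMulVec x w).mulVecLin ≤ R ∙ x := by
  rintro _ ⟨v, rfl⟩
  rw [mulVecLin_apply, vecMulVec_mulVec, op_smul_eq_smul]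
  exact smul_mem _ _ (mem_span_singleton_self x)

theorem sum_vecMulVec_col_single [Fintype p] [DecidableEq p] [NonAssocSemiring R]
    (M : Matrix m p R) : ∑ j, vecMulVec (fun i => M i j) (Pi.single j 1) = M := by
  ext i k
  simp [sum_apply, vecMulVec_apply, Pi.single_apply]

theorem map_smul_of_forall_mem_range_mulVecLin [Fintype m] [Fintype p] [DecidableEq p]
    {F : Type*} [Field F] (hm : 1 < Fintype.card m) (Φ : Matrix m p F →+ (m → F))
    (hΦ : ∀ M, Φ M ∈ LinearMap.range M.mulVecLin) (c : F) (M : Matrix m p F) :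
    Φ (c • M) = c • Φ M := by
  have hrank : 1 < Module.rank F (m → F) := by
    rw [rank_fun']
    exact_mod_cast hm
  let column (j : p) : (m → F) →+ (m → F) :=
    Φ.comp (AddMonoidHom.mk' (fun x => vecMulVec x (Pi.single j 1)) fun x y => add_vecMulVec x y _)
  have hcolumn (j : p) (x : m → F) : column j (c • x) = c • column j x :=
    (column j).map_smul_of_forall_mem_span_singleton hrank
      (fun x => range_mulVecLin_vecMulVec_le x _ (hΦ _)) c x
  have hΦ_columns (N : Matrix m p F) : Φ N = ∑ j, column j fun i => N i j := by
    conv_lhs => rw [← sum_vecMulVec_col_single N]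
    exact map_sum Φ _ _
  rw [hΦ_columns, hΦ_columns, Finset.smul_sum]
  exact Finset.sum_congr rfl fun j _ => hcolumn j _

end Matrix

/-- An additive range-compatible map `Φ : Mat_{n,p}(F) → F^n` with `n ≥ 2`
is automatically `F`-linear. -/
theorem additive_range_compatible_is_linear (F : Type*) [Field F] (n p : ℕ)
    (hn : 2 ≤ n)
    (Φ : Matrix (Fin n) (Fin p) F → (Fin n → F))
    (hadd : ∀ M N, Φ (M + N) = Φ M + Φ N)
    (hrc : ∀ M, Φ M ∈ LinearMap.range M.mulVecLin) :
    ∀ (c : F) (M : Matrix (Fin n) (Fin p) F), Φ (c • M) = c • Φ M :=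
  Matrix.map_smul_of_forall_mem_range_mulVecLin (by rw [Fintype.card_fin]; exact hn)
    (AddMonoidHom.mk' Φ hadd) hrc
end

section
/- (Affine Flanders inequality) Let F be a field and n, p, r non-negative integers with n ≥ p ≥ r. If 𝒱 is an affine subspace of Mat_{n,p}(F) in which every matrix has rank at most r, then dim_F 𝒱 ≤ nr. -/
/-!
Induction on `r`, for all matrix shapes at once. In the inductive step some matrix `B` of the
affine space has rank `r + 1` (otherwise the induction hypothesis applies), so after changing
bases the space is `B + V` with `(m + 1) × (k + 1)` matrices, `r + 1 ≤ k ≤ m`, and the last row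
of `B` is the last unit vector. Let `K ⊆ V` consist of the matrices supported on the last column
strictly above the corner. Whenever the first `k` columns of some `B + M` have rank `r + 1`,
adding an element of `K` cannot raise the rank, so the last columns of `K` lie in their column
space; hence `dim K ≤ r + 1`. Three cases then close the count:
* if the first `k` columns of every `B + M` have rank at most `r`, induct on them:
  `dim V ≤ (m + 1) r + (m + 1)`;
* if `dim K ≤ r`, induct on the upper-left blocks of the elements of `V` with vanishing last row,
  whose rank is one less than that of `B + M`: `dim V ≤ (k + 1) + m r + r`;
* if `dim K = r + 1`, every such column space equals the space of last columns of `K`, which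
  vanish at the corner, so deleting the last column lowers the rank whenever the corner entry of
  `B + M` is nonzero; induct on the elements of `V` with vanishing corner:
  `dim V ≤ 1 + (m + 1) r + (r + 1)`.
-/

open Module Submodule Matrix

theorem Submodule.finrank_map_add_finrank_inf_ker {K M N : Type*} [Field K] [AddCommGroup M]
    [Module K M] [AddCommGroup N] [Module K N] [FiniteDimensional K M] (f : M →ₗ[K] N)
    (V : Submodule K M) :
    finrank K (V.map f) + finrank K ↥(V ⊓ LinearMap.ker f) = finrank K V := by
  have h := LinearMap.finrank_range_add_finrank_ker (f.domRestrict V)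
  rwa [LinearMap.range_domRestrict, LinearMap.ker_domRestrict, ← finrank_map_subtype_eq,
    map_comap_subtype] at h

theorem Matrix.rank_eq_zero_iff {K m n : Type*} [Field K] [Fintype n] {A : Matrix m n K} :
    A.rank = 0 ↔ A = 0 := by
  classical
  rw [rank, Submodule.finrank_eq_zero, LinearMap.range_eq_bot, ← Matrix.toLin'_apply',
    map_eq_zero_iff _ Matrix.toLin'.injective]

theorem Matrix.exists_isUnit_det_vecMul_eq_single {K : Type*} [Field K] {k : ℕ}
    (ρ : Fin (k + 1) → K) (hρ : ρ (Fin.last k) ≠ 0) :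
    ∃ Q : Matrix (Fin (k + 1)) (Fin (k + 1)) K,
      IsUnit Q.det ∧ ρ ᵥ* Q = Pi.single (Fin.last k) 1 := by
  classical
  set R := (1 : Matrix (Fin (k + 1)) (Fin (k + 1)) K).updateRow (Fin.last k) ρ
  have hR : IsUnit R.det := by
    rw [det_of_isLowerTriangular R fun i j hij => ?_, Fin.prod_univ_castSucc]
    · simpa [R, (Fin.castSucc_lt_last _).ne] using hρ
    · have hij : i < j := hij
      have hi : i ≠ Fin.last k := (hij.trans_le (Fin.le_last j)).ne
      simp [R, hi, hij.ne]
  refine ⟨R⁻¹, isUnit_nonsing_inv_det R hR, ?_⟩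
  have hρR : ρ = Pi.single (Fin.last k) 1 ᵥ* R := by
    rw [single_one_vecMul]
    exact (updateRow_self (M := (1 : Matrix (Fin (k + 1)) (Fin (k + 1)) K))).symm
  rw [hρR, vecMul_vecMul, mul_nonsing_inv R hR, vecMul_one]

namespace Flanders

variable {F : Type*} [Field F]

section Blocks

variable {ι : Type*} {m k : ℕ}

@[simps]
def dropLastCol : Matrix ι (Fin (k + 1)) F →ₗ[F] Matrix ι (Fin k) F where
  toFun M := M.submatrix id Fin.castSucc
  map_add' _ _ := rfl
  map_smul' _ _ := rfl

@[simps]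
def lastCol : Matrix ι (Fin (k + 1)) F →ₗ[F] ι → F where
  toFun M := M.col (Fin.last k)
  map_add' _ _ := rfl
  map_smul' _ _ := rfl

@[simps]
def lastRow : Matrix (Fin (m + 1)) (Fin (k + 1)) F →ₗ[F] Fin (k + 1) → F where
  toFun M := M (Fin.last m)
  map_add' _ _ := rfl
  map_smul' _ _ := rfl

@[simps]
def upperLeft : Matrix (Fin (m + 1)) (Fin (k + 1)) F →ₗ[F] Matrix (Fin m) (Fin k) F where
  toFun M := M.submatrix Fin.castSucc Fin.castSucc
  map_add' _ _ := rfl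
  map_smul' _ _ := rfl

@[simps]
def corner : Matrix (Fin (m + 1)) (Fin (k + 1)) F →ₗ[F] F where
  toFun M := M (Fin.last m) (Fin.last k)
  map_add' _ _ := rfl
  map_smul' _ _ := rfl

def aboveCorner : Submodule F (Matrix (Fin (m + 1)) (Fin (k + 1)) F) :=
  LinearMap.ker corner ⊓ LinearMap.ker dropLastCol

theorem ker_dropLastCol_inf_ker_lastCol :
    LinearMap.ker (dropLastCol (F := F) (ι := ι) (k := k)) ⊓ LinearMap.ker lastCol = ⊥ := by
  refine eq_bot_iff.mpr fun M ⟨hdrop, hcol⟩ => ?_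
  ext i j
  refine Fin.lastCases ?_ (fun j => ?_) j
  · exact congrFun hcol i
  · exact congrFun (congrFun hdrop i) j

theorem ker_lastRow_inf_ker_upperLeft :
    LinearMap.ker lastRow ⊓ LinearMap.ker upperLeft = aboveCorner (F := F) (m := m) (k := k) := by
  ext M
  simp only [aboveCorner, Submodule.mem_inf, LinearMap.mem_ker, lastRow_apply, upperLeft_apply,
    corner_apply, dropLastCol_apply, funext_iff, ← Matrix.ext_iff, Fin.forall_fin_succ',
    submatrix_apply, id, Matrix.zero_apply, Pi.zero_apply]
  tauto

end Blocks

section Rank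

variable {ι : Type*} [Fintype ι] {m k : ℕ}

theorem finrank_map_lastCol {W : Submodule F (Matrix ι (Fin (k + 1)) F)}
    (hW : W ≤ LinearMap.ker dropLastCol) : finrank F (W.map lastCol) = finrank F W := by
  have hbot : W ⊓ LinearMap.ker lastCol = ⊥ :=
    eq_bot_iff.mpr <| (inf_le_inf_right _ hW).trans ker_dropLastCol_inf_ker_lastCol.le
  have h := Submodule.finrank_map_add_finrank_inf_ker lastCol W
  rwa [hbot, finrank_bot, add_zero] at h

omit [Fintype ι] in
theorem span_col_dropLastCol_le (C : Matrix ι (Fin (k + 1)) F) :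
    span F (Set.range (dropLastCol C).col) ≤ span F (Set.range C.col) :=
  span_mono <| Set.range_subset_iff.mpr fun j => ⟨j.castSucc, rfl⟩

theorem lastCol_mem_span_col_dropLastCol (C : Matrix ι (Fin (k + 1)) F)
    (h : C.rank ≤ (dropLastCol C).rank) :
    lastCol C ∈ span F (Set.range (dropLastCol C).col) := by
  rw [rank_eq_finrank_span_cols, rank_eq_finrank_span_cols] at h
  rw [eq_of_le_of_finrank_le (span_col_dropLastCol_le C) h]
  exact subset_span ⟨Fin.last k, rfl⟩

theorem rank_upperLeft_add_one_le (C : Matrix (Fin (m + 1)) (Fin (k + 1)) F)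
    (hC : lastRow C = Pi.single (Fin.last k) 1) : (upperLeft C).rank + 1 ≤ C.rank := by
  replace hC : C (Fin.last m) = Pi.single (Fin.last k) 1 := hC
  set S := span F (Set.range C.col)
  set H := S ⊓ LinearMap.ker (LinearMap.proj (Fin.last m) : (Fin (m + 1) → F) →ₗ[F] F)
  have hHS : H < S := by
    refine lt_of_le_of_ne inf_le_left fun hHS => ?_
    have : C.col (Fin.last k) ∈ H := hHS ▸ subset_span ⟨Fin.last k, rfl⟩
    simpa [hC] using this.2
  have hul :
      span F (Set.range (upperLeft C).col) ≤ H.map (LinearMap.funLeft F F Fin.castSucc) := by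
    refine span_le.mpr <| Set.range_subset_iff.mpr fun j =>
      ⟨C.col j.castSucc, ⟨?_, ?_⟩, rfl⟩
    · exact subset_span ⟨j.castSucc, rfl⟩
    · simp [hC]
  rw [rank_eq_finrank_span_cols, rank_eq_finrank_span_cols]
  calc finrank F (span F (Set.range (upperLeft C).col)) + 1
      ≤ finrank F H + 1 := by gcongr; exact (finrank_mono hul).trans (finrank_map_le _ _)
    _ ≤ finrank F S := finrank_lt_finrank_of_lt hHS

theorem exists_rank_preserving_lastRow_eq_single {B : Matrix (Fin (m + 1)) (Fin (k + 1)) F}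
    (hB : B ≠ 0) :
    ∃ T : Matrix (Fin (m + 1)) (Fin (k + 1)) F →ₗ[F] Matrix (Fin (m + 1)) (Fin (k + 1)) F,
      Function.Injective T ∧ (∀ X, (T X).rank = X.rank) ∧
        lastRow (T B) = Pi.single (Fin.last k) 1 := by
  obtain ⟨i, j, hij⟩ : ∃ i j, B i j ≠ 0 := by
    by_contra! h
    exact hB (Matrix.ext h)
  set B' := reindex (Equiv.swap (Fin.last m) i) (Equiv.swap (Fin.last k) j) B
  obtain ⟨Q, hQ, hρQ⟩ :=
    exists_isUnit_det_vecMul_eq_single (B' (Fin.last m)) (by simpa [B'] using hij)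
  let T := mulRightLinearMap (Fin (m + 1)) F Q ∘ₗ
    (reindexLinearEquiv F F (Equiv.swap (Fin.last m) i) (Equiv.swap (Fin.last k) j)).toLinearMap
  have hT : ∀ X, (T X).rank = X.rank := fun X => by
    simp [T, rank_mul_eq_left_of_isUnit_det Q _ hQ]
  refine ⟨T, (injective_iff_map_eq_zero T).mpr fun X hX => ?_, hT, hρQ⟩
  rw [← Matrix.rank_eq_zero_iff, ← hT, hX, rank_zero]

end Rank

variable (F) in
def FlandersBound (r : ℕ) : Prop :=
  ∀ ⦃n p : ℕ⦄, r ≤ p → p ≤ n → ∀ (A : Matrix (Fin n) (Fin p) F)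
    (V : Submodule F (Matrix (Fin n) (Fin p) F)),
    (∀ M ∈ V, (A + M).rank ≤ r) → finrank F V ≤ n * r

theorem FlandersBound.finrank_map_le {r n p : ℕ} (IH : FlandersBound F r) (hrp : r ≤ p)
    (hpn : p ≤ n) {X : Type*} [AddCommGroup X] [Module F X]
    (f : X →ₗ[F] Matrix (Fin n) (Fin p) F) (B : X) {W : Submodule F X}
    (hW : ∀ M ∈ W, (f (B + M)).rank ≤ r) : finrank F (W.map f) ≤ n * r :=
  IH hrp hpn (f B) _ <| by rintro _ ⟨M, hM, rfl⟩; rw [← map_add]; exact hW M hM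

section Step

variable {r m k : ℕ} {B : Matrix (Fin (m + 1)) (Fin (k + 1)) F}
  {V : Submodule F (Matrix (Fin (m + 1)) (Fin (k + 1)) F)}

theorem finrank_le_of_forall_rank_dropLastCol_le (IH : FlandersBound F r) (hrk : r ≤ k)
    (hkm : k ≤ m + 1) (h : ∀ M ∈ V, (dropLastCol (B + M)).rank ≤ r) :
    finrank F V ≤ (m + 1) * (r + 1) := by
  have hsplit := Submodule.finrank_map_add_finrank_inf_ker dropLastCol V
  have hdrop := IH.finrank_map_le hrk hkm dropLastCol B h
  have hker : finrank F ↥(V ⊓ LinearMap.ker dropLastCol) ≤ m + 1 := by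
    rw [← finrank_map_lastCol inf_le_right]
    exact (finrank_le _).trans_eq (by simp)
  linarith [mul_add (m + 1) r 1]

theorem finrank_map_lastCol_inf_aboveCorner :
    finrank F ((V ⊓ aboveCorner).map lastCol) = finrank F ↥(V ⊓ aboveCorner) :=
  finrank_map_lastCol (inf_le_right.trans inf_le_right)

theorem map_lastCol_le_span_col (hV : ∀ M ∈ V, (B + M).rank ≤ r + 1) {M : Matrix _ _ F}
    (hM : M ∈ V) (hrank : (dropLastCol (B + M)).rank = r + 1) :
    (V ⊓ aboveCorner).map lastCol ≤ span F (Set.range (dropLastCol (B + M)).col) := by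
  have hmem : ∀ N ∈ V ⊓ aboveCorner,
      lastCol (B + M + N) ∈ span F (Set.range (dropLastCol (B + M)).col) := by
    rintro N ⟨hNV, -, hN⟩
    have hdrop : dropLastCol (B + M + N) = dropLastCol (B + M) := by
      rw [map_add, LinearMap.mem_ker.mp hN, add_zero]
    rw [← hdrop]
    refine lastCol_mem_span_col_dropLastCol _ ?_
    rw [hdrop, hrank, add_assoc]
    exact hV _ (V.add_mem hM hNV)
  rintro _ ⟨N, hN, rfl⟩
  simpa using sub_mem (hmem N hN) (hmem 0 (zero_mem _))

theorem finrank_le_of_finrank_inf_aboveCorner_le (IH : FlandersBound F r)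
    (hB : lastRow B = Pi.single (Fin.last k) 1) (hV : ∀ M ∈ V, (B + M).rank ≤ r + 1)
    (hrk : r ≤ k) (hkm : k ≤ m) (hK : finrank F ↥(V ⊓ aboveCorner) ≤ r) :
    finrank F V ≤ (m + 1) * (r + 1) := by
  have hsplit₁ := Submodule.finrank_map_add_finrank_inf_ker lastRow V
  have hsplit₂ :=
    Submodule.finrank_map_add_finrank_inf_ker upperLeft (V ⊓ LinearMap.ker lastRow)
  rw [inf_assoc, ker_lastRow_inf_ker_upperLeft] at hsplit₂
  have hrow : finrank F ↥(V.map lastRow) ≤ k + 1 := (finrank_le _).trans_eq (by simp)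
  have hul := IH.finrank_map_le hrk hkm upperLeft B (W := V ⊓ LinearMap.ker lastRow) <| by
    rintro M ⟨hMV, hM⟩
    have hBM : lastRow (B + M) = Pi.single (Fin.last k) 1 := by
      rw [map_add, LinearMap.mem_ker.mp hM, add_zero, hB]
    have := rank_upperLeft_add_one_le _ hBM
    linarith [hV M hMV]
  linarith [mul_add (m + 1) r 1, add_mul m 1 r]

theorem rank_dropLastCol_le_of_corner_ne_zero (hV : ∀ M ∈ V, (B + M).rank ≤ r + 1)
    (hK : finrank F ↥(V ⊓ aboveCorner) = r + 1) {M : Matrix _ _ F} (hM : M ∈ V)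
    (hcorner : corner (B + M) ≠ 0) : (dropLastCol (B + M)).rank ≤ r := by
  by_contra! hlt
  have hrank : (dropLastCol (B + M)).rank = r + 1 :=
    le_antisymm ((rank_submatrix_le _ _ _).trans (hV M hM)) hlt
  have heq := eq_of_le_of_finrank_le (map_lastCol_le_span_col hV hM hrank) <| by
    rw [← rank_eq_finrank_span_cols, hrank, finrank_map_lastCol_inf_aboveCorner, hK]
  obtain ⟨N, ⟨-, hN, -⟩, hNcol⟩ : lastCol (B + M) ∈ (V ⊓ aboveCorner).map lastCol :=
    heq ▸ lastCol_mem_span_col_dropLastCol _ (by rw [hrank]; exact hV M hM)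
  exact hcorner ((congrFun hNcol (Fin.last m)).symm.trans hN)

theorem finrank_le_of_finrank_inf_aboveCorner_eq (IH : FlandersBound F r)
    (hB : lastRow B = Pi.single (Fin.last k) 1) (hV : ∀ M ∈ V, (B + M).rank ≤ r + 1)
    (hrk : r ≤ k) (hkm : k ≤ m) (hrm : r + 1 ≤ m)
    (hK : finrank F ↥(V ⊓ aboveCorner) = r + 1) :
    finrank F V ≤ (m + 1) * (r + 1) := by
  have hsplit₁ := Submodule.finrank_map_add_finrank_inf_ker corner V
  have hsplit₂ :=
    Submodule.finrank_map_add_finrank_inf_ker dropLastCol (V ⊓ LinearMap.ker corner)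
  rw [inf_assoc] at hsplit₂
  change _ + finrank F ↥(V ⊓ aboveCorner) = _ at hsplit₂
  have hcorner : finrank F ↥(V.map corner) ≤ 1 := (finrank_le _).trans_eq (finrank_self F)
  have hdrop := IH.finrank_map_le hrk (hkm.trans m.le_succ) dropLastCol B
    (W := V ⊓ LinearMap.ker corner) <| by
    rintro M ⟨hMV, hM⟩
    refine rank_dropLastCol_le_of_corner_ne_zero hV hK hMV ?_
    have hB1 : corner B = 1 := by simp [← lastRow_apply, hB]
    rw [map_add, LinearMap.mem_ker.mp hM, add_zero, hB1]
    exact one_ne_zero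
  linarith [mul_add (m + 1) r 1]

theorem finrank_le_of_lastRow_eq_single (IH : FlandersBound F r)
    (hB : lastRow B = Pi.single (Fin.last k) 1) (hV : ∀ M ∈ V, (B + M).rank ≤ r + 1)
    (hrk : r + 1 ≤ k) (hkm : k ≤ m) : finrank F V ≤ (m + 1) * (r + 1) := by
  by_cases hdrop : ∀ M ∈ V, (dropLastCol (B + M)).rank ≤ r
  · exact finrank_le_of_forall_rank_dropLastCol_le IH (by omega) (by omega) hdrop
  push Not at hdrop
  obtain ⟨M, hM, hlt⟩ := hdrop
  have hrank : (dropLastCol (B + M)).rank = r + 1 :=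
    le_antisymm ((rank_submatrix_le _ _ _).trans (hV M hM)) hlt
  have hK : finrank F ↥(V ⊓ aboveCorner) ≤ r + 1 := by
    rw [← finrank_map_lastCol_inf_aboveCorner, ← hrank, rank_eq_finrank_span_cols]
    exact finrank_mono (map_lastCol_le_span_col hV hM hrank)
  rcases hK.lt_or_eq with hK | hK
  · exact finrank_le_of_finrank_inf_aboveCorner_le IH hB hV (by omega) hkm (by omega)
  · exact finrank_le_of_finrank_inf_aboveCorner_eq IH hB hV (by omega) hkm (by omega) hK

end Step

theorem flandersBound_zero : FlandersBound F 0 := by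
  intro n p _ _ A V hV
  have hA : A = 0 := by simpa [Matrix.rank_eq_zero_iff] using hV 0 V.zero_mem
  have hV : V = ⊥ := eq_bot_iff.mpr fun M hM => by
    simpa [hA, Matrix.rank_eq_zero_iff] using hV M hM
  simp [hV]

theorem FlandersBound.succ {r : ℕ} (IH : FlandersBound F r) : FlandersBound F (r + 1) := by
  intro n p hrp hpn A V hV
  rcases hrp.eq_or_lt with rfl | hrp
  · exact (finrank_le V).trans_eq (by simp [finrank_matrix])
  by_cases hle : ∀ M ∈ V, (A + M).rank ≤ r
  · exact (IH (by omega) hpn A V hle).trans (Nat.mul_le_mul_left n r.le_succ)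
  push Not at hle
  obtain ⟨M₀, hM₀, hlt⟩ := hle
  obtain ⟨k, rfl⟩ : ∃ k, p = k + 1 := ⟨p - 1, by omega⟩
  obtain ⟨m, rfl⟩ : ∃ m, n = m + 1 := ⟨n - 1, by omega⟩
  have hB : A + M₀ ≠ 0 := fun h => by rw [h, rank_zero] at hlt; omega
  obtain ⟨T, hTinj, hTrank, hTB⟩ := exists_rank_preserving_lastRow_eq_single hB
  rw [(V.equivMapOfInjective T hTinj).finrank_eq]
  refine finrank_le_of_lastRow_eq_single IH hTB ?_ (by omega) (by omega)
  rintro _ ⟨M, hM, rfl⟩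
  rw [← map_add, hTrank, add_assoc]
  exact hV _ (V.add_mem hM₀ hM)

theorem flandersBound (r : ℕ) : FlandersBound F r := by
  induction r with
  | zero => exact flandersBound_zero
  | succ r IH => exact IH.succ

end Flanders

/-- Affine Flanders inequality: an affine subspace `A + V` of `Mat_{n,p}(F)`
(`n ≥ p ≥ r`) in which every matrix has rank at most `r` has dimension at most `nr`. -/
theorem affine_flanders_inequality (F : Type*) [Field F] (n p r : ℕ)
    (hrp : r ≤ p) (hpn : p ≤ n)
    (A : Matrix (Fin n) (Fin p) F) (V : Submodule F (Matrix (Fin n) (Fin p) F))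
    (hrk : ∀ M ∈ (A + ·) '' (V : Set (Matrix (Fin n) (Fin p) F)), Matrix.rank M ≤ r) :
    Module.finrank F V ≤ n * r :=
  Flanders.flandersBound (F := F) r hrp hpn A V fun M hM => hrk _ ⟨M, hM, rfl⟩
end

section
/- Let F be the field with 2 elements and let 𝒰₂ = { [[x, 0],[y, x+1]] : x, y ∈ F } ⊆ Mat_2(F). Then 𝒰₂ is an affine subspace of dimension 2, every matrix in 𝒰₂ has rank at most 1, and 0 ∉ 𝒰₂ (so 𝒰₂ is not a linear subspace). -/
/-!
`𝒰₂` is the translate by `!![0, 0; 0, 1]` of the plane `{!![x, 0; y, x]}`, which is the image of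
an injective linear map from `𝔽₂ × 𝔽₂`. Each of its matrices has determinant `x (x + 1)`, which
vanishes on `𝔽₂`, and its diagonal entries `x` and `x + 1` never vanish together.
-/

/-- The exceptional space `𝒰₂` over `𝔽₂`. -/
def U2 : Set (Matrix (Fin 2) (Fin 2) (ZMod 2)) :=
  {M | ∃ x y : ZMod 2, M = !![x, 0; y, x + 1]}

theorem Matrix.rank_lt_card_of_det_eq_zero {n K : Type*} [Fintype n] [DecidableEq n] [Field K]
    {A : Matrix n n K} (h : A.det = 0) : A.rank < Fintype.card n := by
  obtain ⟨v, hv, hAv⟩ := Matrix.exists_mulVec_eq_zero_iff.mpr h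
  have hker : 1 ≤ Module.finrank K (LinearMap.ker A.mulVecLin) :=
    Submodule.one_le_finrank_iff.mpr ((Submodule.ne_bot_iff _).mpr ⟨v, hAv, hv⟩)
  have hrank_nullity := LinearMap.finrank_range_add_finrank_ker A.mulVecLin
  rw [Module.finrank_fintype_fun_eq_card] at hrank_nullity
  rw [Matrix.rank]
  omega

theorem Matrix.rank_fin_two_le_one_of_det_eq_zero {K : Type*} [Field K] {A : Matrix (Fin 2) (Fin 2) K}
    (h : A.det = 0) : A.rank ≤ 1 :=
  Nat.le_of_lt_succ (A.rank_lt_card_of_det_eq_zero h |>.trans_eq (Fintype.card_fin 2))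

section LowerShift

variable (R : Type*) [CommRing R]

def lowerScalarMap : R × R →ₗ[R] Matrix (Fin 2) (Fin 2) R where
  toFun p := !![p.1, 0; p.2, p.1]
  map_add' p q := by ext i j; fin_cases i <;> fin_cases j <;> simp
  map_smul' c p := by ext i j; fin_cases i <;> fin_cases j <;> simp

theorem lowerScalarMap_injective : Function.Injective (lowerScalarMap R) :=
  Function.LeftInverse.injective (g := fun M => (M 0 0, M 1 0)) fun _ => rfl

theorem finrank_range_lowerScalarMap [Nontrivial R] :
    Module.finrank R (LinearMap.range (lowerScalarMap R)) = 2 := by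
  simp [LinearMap.finrank_range_of_inj (lowerScalarMap_injective R)]

def lowerShiftSet (c : R) : Set (Matrix (Fin 2) (Fin 2) R) :=
  {M | ∃ x y : R, M = !![x, 0; y, x + c]}

variable {R}

theorem lowerShiftSet_eq_image_range (c : R) :
    lowerShiftSet R c = (!![0, 0; 0, c] + ·) '' (LinearMap.range (lowerScalarMap R) : Set _) := by
  have h : ∀ x y : R, !![0, 0; 0, c] + lowerScalarMap R (x, y) = !![x, 0; y, x + c] := by
    intro x y; ext i j; fin_cases i <;> fin_cases j <;> simp [lowerScalarMap, add_comm]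
  ext M
  constructor
  · rintro ⟨x, y, rfl⟩
    exact ⟨_, ⟨(x, y), rfl⟩, h x y⟩
  · rintro ⟨_, ⟨⟨x, y⟩, rfl⟩, rfl⟩
    exact ⟨x, y, h x y⟩

theorem zero_notMem_lowerShiftSet {c : R} (hc : c ≠ 0) : 0 ∉ lowerShiftSet R c := by
  rintro ⟨x, y, h⟩
  have hx : 0 = x := congrFun (congrFun h 0) 0
  have hxc : 0 = x + c := congrFun (congrFun h 1) 1
  rw [← hx, zero_add] at hxc
  exact hc hxc.symm

end LowerShift

/-- `𝒰₂` is an affine subspace of dimension 2, every matrix in it has rank at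
most 1, and it does not contain 0 (hence it is not a linear subspace). -/
theorem U2_properties :
    (∃ (A : Matrix (Fin 2) (Fin 2) (ZMod 2))
        (V : Submodule (ZMod 2) (Matrix (Fin 2) (Fin 2) (ZMod 2))),
        Module.finrank (ZMod 2) V = 2 ∧
        U2 = (A + ·) '' (V : Set (Matrix (Fin 2) (Fin 2) (ZMod 2)))) ∧
    (∀ M ∈ U2, Matrix.rank M ≤ 1) ∧
    (0 : Matrix (Fin 2) (Fin 2) (ZMod 2)) ∉ U2 := by
  have hU2 : U2 = lowerShiftSet (ZMod 2) 1 := rfl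
  refine ⟨⟨_, _, finrank_range_lowerScalarMap _, hU2 ▸ lowerShiftSet_eq_image_range 1⟩, ?_,
    hU2 ▸ zero_notMem_lowerShiftSet one_ne_zero⟩
  have hdet : ∀ x : ZMod 2, x * (x + 1) = 0 := by decide
  rintro M ⟨x, y, rfl⟩
  apply Matrix.rank_fin_two_le_one_of_det_eq_zero
  simpa [Matrix.det_fin_two_of] using hdet x
end

section
/- Let F be a finite field with q elements and n, p, r positive integers with n ≥ p ≥ r. If 𝒱 is an additive subgroup of Mat_{n,p}(F) in which every matrix has rank at most r, then the cardinality of 𝒱 is at most q^{nr}. -/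
/-!
Let `s = p - r`. Identify `Mat_{n,p}(F)` with the `F`-linear maps from a `p`-dimensional
subspace of `K = 𝔽_{q^n}` to `K`. The Gabidulin maps `x ↦ ∑_{i<s} aᵢ x^{q^i}` (`a ∈ K^s`) form an
additive family `D` of `q^{ns}` matrices; for `a ≠ 0` the kernel consists of roots of a nonzero
polynomial of degree at most `q^{s-1}`, so it has dimension `< s` and the matrix has rank `> r`.
Hence `V ∩ D = 0`, the sums `v + d` are pairwise distinct, and `|V| q^{ns} ≤ q^{np}`.
-/

open Module Polynomial

theorem LinearMap.finrank_le_finrank_range_comp_add_finrank_ker {F U V W : Type*} [Field F]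
    [AddCommGroup U] [Module F U] [FiniteDimensional F U] [AddCommGroup V] [Module F V]
    [FiniteDimensional F V] [AddCommGroup W] [Module F W] (f : V →ₗ[F] W) {g : U →ₗ[F] V}
    (hg : Function.Injective g) :
    finrank F U ≤ finrank F (range (f ∘ₗ g)) + finrank F (ker f) := by
  have hker : finrank F (ker (f ∘ₗ g)) ≤ finrank F (ker f) :=
    finrank_le_finrank_of_injective (f := g.restrict fun _ hx => hx)
      fun x y hxy => Subtype.ext (hg (congrArg Subtype.val hxy))
  have := (f ∘ₗ g).finrank_range_add_finrank_ker
  omega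

theorem AddSubgroup.card_mul_card_le_of_inf_eq_bot {G : Type*} [AddGroup G] [Finite G]
    {H K : AddSubgroup G} (h : H ⊓ K = ⊥) : Nat.card H * Nat.card K ≤ Nat.card G := by
  rw [← Nat.card_prod]
  refine Nat.card_le_card_of_injective (fun x => (x.1 : G) + x.2) ?_
  rintro ⟨x, y⟩ ⟨x', y'⟩ (hxy : (x : G) + y = x' + y')
  have hmem : -(x' : G) + x ∈ H ⊓ K := by
    refine ⟨H.add_mem (H.neg_mem x'.2) x.2, ?_⟩
    have : -(x' : G) + x = y' + -y := by
      rw [neg_add_eq_iff_eq_add, ← add_assoc, ← hxy, add_neg_cancel_right]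
    exact this ▸ K.add_mem y'.2 (K.neg_mem y.2)
  rw [h, AddSubgroup.mem_bot, neg_add_eq_zero] at hmem
  rw [← hmem] at hxy
  exact Prod.ext (Subtype.ext hmem.symm) (Subtype.ext (add_left_cancel hxy))

namespace FiniteField

variable {F K : Type*} [Field F] [Fintype F] [Field K]

local notation "q" => Fintype.card F

variable (F) in
noncomputable def linearizedPolynomial {s : ℕ} (a : Fin s → K) : K[X] :=
  ∑ i : Fin s, monomial (q ^ (i : ℕ)) (a i)

theorem coeff_linearizedPolynomial {s : ℕ} (a : Fin s → K) (j : Fin s) :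
    (linearizedPolynomial F a).coeff (q ^ (j : ℕ)) = a j := by
  rw [linearizedPolynomial, finsetSum_coeff, Finset.sum_eq_single j]
  · exact coeff_monomial_same _ _
  · intro i _ hij
    rw [coeff_monomial, if_neg]
    exact fun h => hij (Fin.ext (Nat.pow_right_injective Fintype.one_lt_card h))
  · simp

theorem linearizedPolynomial_ne_zero {s : ℕ} {a : Fin s → K} (ha : a ≠ 0) :
    linearizedPolynomial F a ≠ 0 := by
  obtain ⟨j, hj⟩ := Function.ne_iff.mp ha
  intro h
  exact hj (by rw [← coeff_linearizedPolynomial (F := F) a j, h, coeff_zero, Pi.zero_apply])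

theorem natDegree_linearizedPolynomial_le {s : ℕ} (a : Fin s → K) :
    (linearizedPolynomial F a).natDegree ≤ q ^ (s - 1) := by
  refine natDegree_sum_le_of_forall_le _ _ fun i _ => (natDegree_monomial_le _).trans ?_
  exact Nat.pow_le_pow_right Fintype.card_pos (by omega)

variable [Algebra F K]

variable (F) in
noncomputable def linearizedMap {s : ℕ} : (Fin s → K) →ₗ[K] K →ₗ[F] K :=
  Fintype.linearCombination K fun i : Fin s => (frobeniusAlgHom F K ^ (i : ℕ)).toLinearMap

theorem linearizedMap_apply {s : ℕ} (a : Fin s → K) (x : K) :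
    linearizedMap F a x = (linearizedPolynomial F a).eval x := by
  simp [linearizedMap, linearizedPolynomial, Fintype.linearCombination_apply, eval_finsetSum,
    coe_frobeniusAlgHom, pow_iterate]

theorem natCard_ker_linearizedMap_le {s : ℕ} {a : Fin s → K} (ha : a ≠ 0) :
    Nat.card (LinearMap.ker (linearizedMap F a)) ≤ q ^ (s - 1) := by
  have hP := linearizedPolynomial_ne_zero (F := F) ha
  have hroots : (LinearMap.ker (linearizedMap F a) : Set K) ⊆
      (linearizedPolynomial F a).rootSet K := fun x hx =>
    (mem_rootSet_of_ne hP).2 <| by rwa [coe_aeval_eq_eval, ← linearizedMap_apply]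
  calc Nat.card (LinearMap.ker (linearizedMap F a))
      ≤ ((linearizedPolynomial F a).rootSet K).ncard :=
        Set.ncard_le_ncard hroots (rootSet_finite _ _)
    _ ≤ (linearizedPolynomial F a).natDegree := ncard_rootSet_le _ _
    _ ≤ q ^ (s - 1) := natDegree_linearizedPolynomial_le a

theorem finrank_ker_linearizedMap_lt [FiniteDimensional F K] {s : ℕ} {a : Fin s → K}
    (ha : a ≠ 0) : finrank F (LinearMap.ker (linearizedMap F a)) < s := by
  obtain ⟨i, -⟩ := Function.ne_iff.mp ha
  have hcard := natCard_ker_linearizedMap_le (F := F) ha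
  rw [Module.natCard_eq_pow_finrank (K := F), ← Nat.card_eq_fintype_card] at hcard
  have := (Nat.pow_le_pow_iff_right Finite.one_lt_card).mp hcard
  have := i.pos
  omega

end FiniteField

section RankDistanceCode

open FiniteField

variable {F : Type*} [Field F] [Fintype F]

theorem exists_addMonoidHom_lt_rank_of_finrank_eq (K : Type*) [Field K] [Algebra F K]
    [FiniteDimensional F K] {n p s : ℕ} (hK : finrank F K = n) (hsp : s ≤ p) (hpn : p ≤ n) :
    ∃ Θ : (Fin s → K) →+ Matrix (Fin n) (Fin p) F, ∀ a ≠ 0, p - s < (Θ a).rank := by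
  obtain ⟨ι, hι⟩ := finrank_le_iff_exists_linearMap.mp
    (by rwa [finrank_fin_fun, hK] : finrank F (Fin p → F) ≤ finrank F K)
  let bK := finBasisOfFinrankEq F K hK
  let bp := Pi.basisFun F (Fin p)
  refine ⟨AddMonoidHom.mk' (fun a => LinearMap.toMatrix bp bK (linearizedMap F a ∘ₗ ι))
    fun a b => by simp only [map_add, LinearMap.add_comp], fun a ha => ?_⟩
  rw [AddMonoidHom.mk'_apply, Matrix.rank_eq_finrank_range_toLin _ bK bp, Matrix.toLin_toMatrix]
  have hrange := (linearizedMap F a).finrank_le_finrank_range_comp_add_finrank_ker hι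
  have hker := finrank_ker_linearizedMap_lt (F := F) ha
  rw [finrank_fin_fun] at hrange
  omega

theorem exists_addSubgroup_natCard_eq_lt_rank {n p s : ℕ} (hn : n ≠ 0) (hsp : s ≤ p)
    (hpn : p ≤ n) :
    ∃ D : AddSubgroup (Matrix (Fin n) (Fin p) F),
      Nat.card D = Fintype.card F ^ (n * s) ∧ ∀ M ∈ D, M ≠ 0 → p - s < M.rank := by
  have : NeZero n := ⟨hn⟩
  have : Fact (ringChar F).Prime := ⟨CharP.char_is_prime F (ringChar F)⟩
  obtain ⟨Θ, hΘ⟩ := exists_addMonoidHom_lt_rank_of_finrank_eq (Extension F (ringChar F) n)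
    (finrank_extension F (ringChar F) n) hsp hpn
  have hinj : Function.Injective Θ := (injective_iff_map_eq_zero Θ).2 fun a h0 => by
    by_contra ha
    simpa [h0] using hΘ a ha
  refine ⟨Θ.range, ?_, ?_⟩
  · rw [← Nat.card_congr (AddMonoidHom.ofInjective hinj).toEquiv, Nat.card_fun,
      natCard_extension, Nat.card_fin, Nat.card_eq_fintype_card, pow_mul]
  · rintro _ ⟨a, rfl⟩ hM
    exact hΘ a fun ha => hM (by rw [ha, map_zero])

end RankDistanceCode

/-- Over a finite field with `q` elements, an additive subgroup of `Mat_{n,p}(F)`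
(`n ≥ p ≥ r > 0`) in which every matrix has rank at most `r` has cardinality at
most `q^(nr)`. -/
theorem flanders_finite_field (F : Type*) [Field F] [Fintype F] (n p r : ℕ)
    (hr : 0 < r) (hrp : r ≤ p) (hpn : p ≤ n)
    (V : AddSubgroup (Matrix (Fin n) (Fin p) F))
    (hrk : ∀ M ∈ V, Matrix.rank M ≤ r) :
    Nat.card V ≤ (Fintype.card F) ^ (n * r) := by
  obtain ⟨D, hD, hrankD⟩ :=
    exists_addSubgroup_natCard_eq_lt_rank (F := F) (s := p - r) (by omega) (Nat.sub_le p r) hpn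
  have hdisj : V ⊓ D = ⊥ := eq_bot_iff.2 fun M ⟨hMV, hMD⟩ => by
    by_contra hM
    have := hrankD M hMD hM
    have := hrk M hMV
    omega
  have hcard : Nat.card (Matrix (Fin n) (Fin p) F) =
      Fintype.card F ^ (n * r) * Fintype.card F ^ (n * (p - r)) := by
    rw [← pow_add, ← mul_add, Nat.add_sub_cancel' hrp, mul_comm, pow_mul]
    simp [Matrix]
  have := AddSubgroup.card_mul_card_le_of_inf_eq_bot hdisj
  rw [hD, hcard] at this
  exact Nat.le_of_mul_le_mul_right this (by positivity)
end

section
/- Let F be a field, r ≤ min(n,p), and let J_r ∈ Mat_{n,p}(F) be the matrix with identity I_r in the top-left r×r block and zeros elsewhere. Let N ∈ Mat_{n,p}(F) be a matrix whose only possibly nonzero column is the last one. If rank(J_r + N) ≤ r and p > r, then the last n − r entries of the last column of N are zero. -/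
/-!
If `N` were nonzero at `(i, j)` with `i, j ≥ r`, the square submatrix of
`J_r + N` (with `J_r = cornerIdentity F n p r`) on the rows
`0, …, r - 1, i` and the columns `0, …, r - 1, j` would be upper triangular with diagonal
`1, …, 1, N i j`, hence invertible, and `J_r + N` would have rank at least `r + 1`.
-/

namespace Matrix

theorem card_le_rank_of_det_submatrix_ne_zero {K m n k : Type*} [Field K] [Fintype n]
    [Fintype k] [DecidableEq k] (A : Matrix m n K) (f : k → m) (g : k → n)
    (h : (A.submatrix f g).det ≠ 0) : Fintype.card k ≤ A.rank := by
  rw [← rank_of_isUnit _ ((isUnit_iff_isUnit_det _).2 h.isUnit)]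
  exact rank_submatrix_le A f g

def cornerIdentity (K : Type*) [Zero K] [One K] (n p r : ℕ) : Matrix (Fin n) (Fin p) K :=
  of fun i j => if (i : ℕ) = j ∧ (i : ℕ) < r then 1 else 0

variable {K : Type*} [Field K] {n p r : ℕ}

theorem det_submatrix_cornerIdentity_add (N : Matrix (Fin n) (Fin p) K)
    (hN : ∀ a (b : Fin p), (b : ℕ) < r → N a b = 0) {i : Fin n} {j : Fin p}
    (hi : r ≤ i) (hj : r ≤ j) :
    ((cornerIdentity K n p r + N).submatrix (Fin.lastCases i (Fin.castLE (hi.trans i.is_le')))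
      (Fin.lastCases j (Fin.castLE (hj.trans j.is_le')))).det = N i j := by
  rw [det_of_isUpperTriangular, Fin.prod_univ_castSucc]
  · simp [cornerIdentity, hN, not_lt.2 hi]
  · intro a b hba
    induction a using Fin.lastCases with
    | last =>
      induction b using Fin.lastCases with
      | last => exact absurd hba (lt_irrefl _)
      | cast b => simp [cornerIdentity, hN, not_lt.2 hi]
    | cast a =>
      induction b using Fin.lastCases with
      | last => exact absurd hba (Fin.castSucc_lt_last a).not_gt
      | cast b =>
        have hab : (a : ℕ) ≠ b := (show (b : ℕ) < a from hba).ne'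
        simp [cornerIdentity, hN, hab]

theorem eq_zero_of_rank_cornerIdentity_add_le (N : Matrix (Fin n) (Fin p) K)
    (hN : ∀ a (b : Fin p), (b : ℕ) < r → N a b = 0)
    (hrank : (cornerIdentity K n p r + N).rank ≤ r) {i : Fin n} {j : Fin p}
    (hi : r ≤ i) (hj : r ≤ j) : N i j = 0 := by
  by_contra hij
  have := card_le_rank_of_det_submatrix_ne_zero _ _ _
    ((det_submatrix_cornerIdentity_add N hN hi hj).trans_ne hij)
  rw [Fintype.card_fin] at this
  omega

end Matrix

theorem last_column_entries_vanish_general (F : Type*) [Field F] (n p r : ℕ)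
    (hrp : r < p)
    (N : Matrix (Fin n) (Fin p) F)
    (hN : ∀ (i : Fin n) (j : Fin p), (j : ℕ) + 1 ≠ p → N i j = 0)
    (h : ((Matrix.of fun (i : Fin n) (j : Fin p) =>
        if (i : ℕ) = (j : ℕ) ∧ (i : ℕ) < r then (1 : F) else 0) + N).rank ≤ r) :
    ∀ (i : Fin n) (j : Fin p), r ≤ (i : ℕ) → N i j = 0 := by
  intro i j hi
  by_cases hj : (j : ℕ) + 1 = p
  · exact Matrix.eq_zero_of_rank_cornerIdentity_add_le N
      (fun a b hb => hN a b (by omega)) h hi (by omega)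
  · exact hN i j hj

/-- If `N` is supported in its last column and `rank (J_r + N) ≤ r` (with
`r ≤ n`, `r < p`), then the last `n - r` entries of the last column of `N`
vanish; since the other columns of `N` are zero, all rows of `N` of index
`≥ r` vanish. -/
theorem last_column_entries_vanish (F : Type*) [Field F] (n p r : ℕ)
    (hrn : r ≤ n) (hrp : r < p)
    (N : Matrix (Fin n) (Fin p) F)
    (hN : ∀ (i : Fin n) (j : Fin p), (j : ℕ) + 1 ≠ p → N i j = 0)
    (h : ((Matrix.of fun (i : Fin n) (j : Fin p) =>
        if (i : ℕ) = (j : ℕ) ∧ (i : ℕ) < r then (1 : F) else 0) + N).rank ≤ r) :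
    ∀ (i : Fin n) (j : Fin p), r ≤ (i : ℕ) → N i j = 0 :=
  last_column_entries_vanish_general F n p r hrp N hN h
end

section
/- Let F be a field, n ≥ p ≥ 1, and let 𝒱 ⊆ Mat_{n,p}(F) be an affine rank-≤r subspace of the form 𝒱 = { [N | Φ(N)] : N ∈ Mat_{n,p-1}(F) } where Φ : Mat_{n,p-1}(F) → F^n is an affine map, with p − 1 = r < n and n ≥ 2. If every matrix in 𝒱 has rank at most r and (n, p, r, |F|) ≠ (2, 2, 1, 2), then Φ(N) lies in the column space of N for every N. -/
open LinearMap Submodule Module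

namespace FlandersAux

variable {F : Type*} [Field F] {n r : ℕ}

/-- The rank-one matrix whose associated linear map is `x ↦ f x • u`. -/
def mf (u : Fin n → F) (f : (Fin r → F) →ₗ[F] F) : Matrix (Fin n) (Fin r) F :=
  Matrix.of fun i j => u i * f (Pi.single j 1)

lemma dual_apply_eq_sum (f : (Fin r → F) →ₗ[F] F) (x : Fin r → F) :
    f x = ∑ j, x j * f (Pi.single j 1) := by
  conv_lhs => rw [← Finset.univ_sum_single x]
  rw [map_sum]
  refine Finset.sum_congr rfl fun j _ => ?_
  have h : Pi.single j (x j) = x j • (Pi.single j 1 : Fin r → F) := by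
    ext k
    by_cases h : k = j <;> simp [Pi.single_apply, h]
  rw [h, map_smul, smul_eq_mul]

lemma mf_mulVec (u : Fin n → F) (f : (Fin r → F) →ₗ[F] F) (x : Fin r → F) :
    (mf u f).mulVec x = f x • u := by
  funext i
  simp only [Matrix.mulVec, dotProduct, mf, Matrix.of_apply, Pi.smul_apply, smul_eq_mul]
  rw [dual_apply_eq_sum f x, Finset.sum_mul]
  exact Finset.sum_congr rfl fun j _ => by ring

lemma mf_add_left (u v : Fin n → F) (f : (Fin r → F) →ₗ[F] F) :
    mf (u + v) f = mf u f + mf v f := by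
  ext i j; simp [mf, add_mul]

lemma mf_smul_left (t : F) (u : Fin n → F) (f : (Fin r → F) →ₗ[F] F) :
    mf (t • u) f = t • mf u f := by
  ext i j; simp [mf, mul_assoc]

lemma mf_add_right (u : Fin n → F) (f g : (Fin r → F) →ₗ[F] F) :
    mf u (f + g) = mf u f + mf u g := by
  ext i j; simp [mf, mul_add]

lemma add_mf_apply (N : Matrix (Fin n) (Fin r) F) (u : Fin n → F)
    (f : (Fin r → F) →ₗ[F] F) (x : Fin r → F) :
    (N + mf u f).mulVecLin x = N.mulVecLin x + f x • u := by
  simp [Matrix.mulVecLin_apply, Matrix.add_mulVec, mf_mulVec]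

lemma A2_apply (N : Matrix (Fin n) (Fin r) F) (a b : Fin n → F)
    (φ χ : (Fin r → F) →ₗ[F] F) (x : Fin r → F) :
    (N + (mf a φ + mf b χ)).mulVecLin x = N.mulVecLin x + φ x • a + χ x • b := by
  simp [Matrix.mulVecLin_apply, Matrix.add_mulVec, mf_mulVec, add_assoc]

lemma exists_dual {V : Type*} [AddCommGroup V] [Module F V] [FiniteDimensional F V]
    (x : V) (hx : x ≠ 0) : ∃ f : V →ₗ[F] F, f x = 1 := by
  obtain ⟨i, hi⟩ : ∃ i, (Module.finBasis F V).repr x i ≠ 0 := by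
    by_contra h
    push_neg at h
    apply hx
    have h0 : (Module.finBasis F V).repr x = 0 := by ext i; exact h i
    exact ((Module.finBasis F V).repr.map_eq_zero_iff).mp h0
  refine ⟨((Module.finBasis F V).repr x i)⁻¹ • (Module.finBasis F V).coord i, ?_⟩
  simp [Basis.coord_apply, inv_mul_cancel₀ hi]

lemma exists_dual_annihilator (U : Submodule F (Fin r → F)) (k : Fin r → F) (hk : k ∉ U) :
    ∃ χ : (Fin r → F) →ₗ[F] F, χ k = 1 ∧ ∀ x ∈ U, χ x = 0 := by
  have h0 : U.mkQ k ≠ 0 := by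
    simpa [Submodule.mkQ_apply, Submodule.Quotient.mk_eq_zero] using hk
  obtain ⟨f, hf⟩ := exists_dual (F := F) (U.mkQ k) h0
  refine ⟨f.comp U.mkQ, by simpa using hf, fun x hx => ?_⟩
  have : U.mkQ x = 0 := by
    simpa [Submodule.mkQ_apply, Submodule.Quotient.mk_eq_zero] using hx
  simp [LinearMap.comp_apply, this]

lemma exists_notMem_of_finrank_lt (S : Submodule F (Fin n → F)) (h : finrank F S < n) :
    ∃ u, u ∉ S := by
  by_contra hc
  push_neg at hc
  have hS : S = ⊤ := eq_top_iff.mpr fun x _ => hc x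
  rw [hS, finrank_top] at h
  rw [Module.finrank_fin_fun] at h
  omega

lemma finrank_sup_span_le (W : Submodule F (Fin n → F)) (x : Fin n → F) :
    finrank F ↥(W ⊔ span F {x}) ≤ finrank F W + 1 := by
  have h1 : finrank F ↥(span F {x}) ≤ 1 := by
    by_cases hx : x = 0
    · subst hx
      rw [Submodule.span_zero_singleton]
      simp
    · rw [finrank_span_singleton hx]
  have h2 := Submodule.finrank_sup_add_finrank_inf_eq W (span F {x})
  omega

lemma codim2_mem {W : Submodule F (Fin n → F)} (hW : finrank F W + 2 ≤ n) {x : Fin n → F}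
    (hx : ∀ u, u ∉ W → x ∈ W ⊔ span F {u}) : x ∈ W := by
  by_contra hxW
  obtain ⟨u, hu⟩ := exists_notMem_of_finrank_lt (W ⊔ span F {x})
    (by have := finrank_sup_span_le W x; omega)
  have huW : u ∉ W := fun h => hu (Submodule.mem_sup_left h)
  obtain ⟨w, hw, y, hy, hxy⟩ := Submodule.mem_sup.mp (hx u huW)
  obtain ⟨t, rfl⟩ := Submodule.mem_span_singleton.mp hy
  by_cases ht : t = 0
  · exact hxW (by rw [← hxy, ht, zero_smul, add_zero]; exact hw)
  · apply hu
    have hu' : u = t⁻¹ • (x - w) := by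
      rw [← hxy]
      rw [add_sub_cancel_left, smul_smul, inv_mul_cancel₀ ht, one_smul]
    rw [hu']
    exact Submodule.smul_mem _ _ (sub_mem
      (Submodule.mem_sup_right (Submodule.mem_span_singleton_self x))
      (Submodule.mem_sup_left hw))

lemma ker_add_mf (N : Matrix (Fin n) (Fin r) F) (u : Fin n → F)
    (f : (Fin r → F) →ₗ[F] F) (hu : u ∉ LinearMap.range N.mulVecLin) :
    LinearMap.ker (N + mf u f).mulVecLin = LinearMap.ker N.mulVecLin ⊓ LinearMap.ker f := by
  ext x
  simp only [LinearMap.mem_ker, Submodule.mem_inf, add_mf_apply]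
  constructor
  · intro h
    by_cases hf : f x = 0
    · rw [hf, zero_smul, add_zero] at h
      exact ⟨h, hf⟩
    · exfalso
      apply hu
      have hb : f x • u = -(N.mulVecLin x) := eq_neg_of_add_eq_zero_right h
      refine ⟨(f x)⁻¹ • (-x), ?_⟩
      rw [map_smul, map_neg]
      rw [show -N.mulVecLin x = f x • u from hb.symm]
      rw [smul_smul, inv_mul_cancel₀ hf, one_smul]
  · rintro ⟨h1, h2⟩
    rw [h1, h2, zero_smul, add_zero]

lemma range_add_mf (N : Matrix (Fin n) (Fin r) F) (u : Fin n → F)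
    (f : (Fin r → F) →ₗ[F] F) (q : Fin r → F)
    (hq : N.mulVecLin q = 0) (hfq : f q = 1) :
    LinearMap.range (N + mf u f).mulVecLin
      = LinearMap.range N.mulVecLin ⊔ span F {u} := by
  apply le_antisymm
  · rintro _ ⟨x, rfl⟩
    rw [add_mf_apply]
    exact add_mem (Submodule.mem_sup_left ⟨x, rfl⟩)
      (Submodule.mem_sup_right (Submodule.smul_mem _ _ (Submodule.mem_span_singleton_self u)))
  · apply sup_le
    · rintro _ ⟨x, rfl⟩
      refine ⟨x - f x • q, ?_⟩
      rw [add_mf_apply, map_sub, map_smul, hq, smul_zero, sub_zero, map_sub, map_smul, hfq,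
        smul_eq_mul, mul_one, sub_self, zero_smul, add_zero]
    · rw [Submodule.span_le]
      intro y hy
      rw [Set.mem_singleton_iff] at hy
      rw [hy]
      refine ⟨q, ?_⟩
      rw [add_mf_apply, hq, hfq, zero_add, one_smul]

lemma ker_add_mf2 (N : Matrix (Fin n) (Fin r) F) {a b : Fin n → F}
    {φ χ : (Fin r → F) →ₗ[F] F} {ka : Fin r → F}
    (hka : N.mulVecLin ka = a) (hb : b ∉ LinearMap.range N.mulVecLin)
    (hχka : χ ka = 1)
    (hχ0 : ∀ x ∈ LinearMap.ker N.mulVecLin, χ x = 0) :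
    LinearMap.ker (N + (mf a φ + mf b χ)).mulVecLin
      = LinearMap.ker N.mulVecLin ⊓ LinearMap.ker φ := by
  ext x
  simp only [LinearMap.mem_ker, Submodule.mem_inf, A2_apply]
  constructor
  · intro h
    have hχx : χ x = 0 := by
      by_contra hc
      apply hb
      have hbe : χ x • b = -(N.mulVecLin x + φ x • a) := eq_neg_of_add_eq_zero_right h
      refine ⟨(χ x)⁻¹ • (-(x + φ x • ka)), ?_⟩
      rw [map_smul, map_neg, map_add, map_smul, hka]
      rw [show -(N.mulVecLin x + φ x • a) = χ x • b from hbe.symm]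
      rw [smul_smul, inv_mul_cancel₀ hc, one_smul]
    have hTy : N.mulVecLin (x + φ x • ka) = 0 := by
      rw [map_add, map_smul, hka]
      rw [hχx, zero_smul, add_zero] at h
      exact h
    have hφx : φ x = 0 := by
      have h2 := hχ0 _ hTy
      rw [map_add, map_smul, hχka, smul_eq_mul, mul_one, hχx, zero_add] at h2
      exact h2
    have hTx : N.mulVecLin x = 0 := by
      rw [hφx, zero_smul, add_zero] at hTy
      exact hTy
    exact ⟨hTx, hφx⟩
  · rintro ⟨h1, h2⟩
    rw [h1, h2, zero_smul, add_zero, zero_add, hχ0 x h1, zero_smul]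

lemma range_add_mf2 (N : Matrix (Fin n) (Fin r) F) {a b : Fin n → F}
    {φ χ : (Fin r → F) →ₗ[F] F} {ka q : Fin r → F}
    (hka : N.mulVecLin ka = a) (hTq : N.mulVecLin q = 0)
    (hφq : φ q = 1) (hφka : φ ka = 0) (hχka : χ ka = 1) (hχq : χ q = 0) :
    LinearMap.range (N + (mf a φ + mf b χ)).mulVecLin
      = LinearMap.range N.mulVecLin ⊔ span F {b} := by
  apply le_antisymm
  · rintro _ ⟨x, rfl⟩
    rw [A2_apply]
    exact add_mem (add_mem (Submodule.mem_sup_left ⟨x, rfl⟩)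
      (Submodule.mem_sup_left (Submodule.smul_mem _ _ ⟨ka, hka⟩)))
      (Submodule.mem_sup_right (Submodule.smul_mem _ _ (Submodule.mem_span_singleton_self b)))
  · apply sup_le
    · rintro _ ⟨x, rfl⟩
      refine ⟨x + (χ x - φ x) • q + (-(χ x)) • ka, ?_⟩
      rw [A2_apply]
      have hT : N.mulVecLin (x + (χ x - φ x) • q + (-(χ x)) • ka)
          = N.mulVecLin x + (-(χ x)) • a := by
        rw [map_add, map_add, map_smul, map_smul, hTq, smul_zero, add_zero, hka]
      have hφ : φ (x + (χ x - φ x) • q + (-(χ x)) • ka) = χ x := by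
        rw [map_add, map_add, map_smul, map_smul, hφq, hφka, smul_eq_mul, smul_eq_mul]
        ring
      have hχ : χ (x + (χ x - φ x) • q + (-(χ x)) • ka) = 0 := by
        rw [map_add, map_add, map_smul, map_smul, hχq, hχka, smul_eq_mul, smul_eq_mul]
        ring
      rw [hT, hφ, hχ, zero_smul, add_zero]
      rw [add_assoc, neg_smul, neg_add_cancel, add_zero]
    · rw [Submodule.span_le]
      intro y hy
      rw [Set.mem_singleton_iff] at hy
      rw [hy]
      have hAq : (N + (mf a φ + mf b χ)).mulVecLin q = a := by
        rw [A2_apply, hTq, hφq, hχq, zero_add, one_smul, zero_smul, add_zero]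
      have hAqk : (N + (mf a φ + mf b χ)).mulVecLin (q + ka) = a + a + b := by
        rw [A2_apply, map_add, hTq, hka, zero_add, map_add, hφq, hφka, add_zero,
          map_add, hχq, hχka, zero_add, one_smul, one_smul]
      have hmem2 : (N + (mf a φ + mf b χ)).mulVecLin (q + ka)
          - (N + (mf a φ + mf b χ)).mulVecLin q - (N + (mf a φ + mf b χ)).mulVecLin q
          ∈ LinearMap.range (N + (mf a φ + mf b χ)).mulVecLin :=
        sub_mem (sub_mem ⟨q + ka, rfl⟩ ⟨q, rfl⟩) ⟨q, rfl⟩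
      rwa [hAq, hAqk, show a + a + b - a - a = b by abel] at hmem2

lemma eq_zero_of_mem_two_spans (hn2 : 2 ≤ n) (v : Fin n → F)
    (h : ∀ u : Fin n → F, u ≠ 0 → v ∈ span F {u}) : v = 0 := by
  have hsingle : ∀ i : Fin n, (Pi.single i 1 : Fin n → F) ≠ 0 := by
    intro i hi
    have := congrFun hi i
    simp at this
  set i0 : Fin n := ⟨0, by omega⟩ with hi0
  set i1 : Fin n := ⟨1, by omega⟩ with hi1
  have hne : i1 ≠ i0 := by simp [hi0, hi1, Fin.ext_iff]
  obtain ⟨c0, hc0⟩ := Submodule.mem_span_singleton.mp (h _ (hsingle i0))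
  obtain ⟨c1, hc1⟩ := Submodule.mem_span_singleton.mp (h _ (hsingle i1))
  funext k
  by_cases hk : k = i0
  · subst hk
    have := congrFun hc1 i0
    simp only [Pi.smul_apply, smul_eq_mul] at this
    rw [Pi.single_eq_of_ne (Ne.symm (Ne.symm hne).symm) 1] at this
    simp only [mul_zero] at this
    simp [← this]
  · have := congrFun hc0 k
    simp only [Pi.smul_apply, smul_eq_mul] at this
    rw [Pi.single_eq_of_ne hk 1] at this
    simp only [mul_zero] at this
    simp [← this]

end FlandersAux

set_option maxHeartbeats 2000000 in
open FlandersAux in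
/-- Key claim in the equality case of Flanders's theorem: if
`𝒱 = { [N | Φ(N)] : N ∈ Mat_{n,r}(F) }` (with `p = r + 1 ≤ n`, `n ≥ 2`) is a
rank-`≤ r` affine space, `Φ` affine, and we are not in the exceptional case
`(n,p,r,|F|) = (2,2,1,2)`, then `Φ` is range-compatible. -/
theorem appended_column_range_compatible (F : Type*) [Field F] (n r : ℕ)
    (hn2 : 2 ≤ n) (hrn : r < n) (hpn : r + 1 ≤ n)
    (Φ : Matrix (Fin n) (Fin r) F → (Fin n → F))
    (haff : ∃ (L : Matrix (Fin n) (Fin r) F →ₗ[F] (Fin n → F)) (c : Fin n → F),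
      ∀ N, Φ N = L N + c)
    (hrk : ∀ N : Matrix (Fin n) (Fin r) F,
      (Matrix.of fun (i : Fin n) (j : Fin (r + 1)) =>
        if h : (j : ℕ) < r then N i ⟨(j : ℕ), h⟩ else Φ N i).rank ≤ r)
    (hexc : ¬ (n = 2 ∧ r = 1 ∧ Nat.card F = 2)) :
    ∀ N, Φ N ∈ LinearMap.range N.mulVecLin := by
  classical
  obtain ⟨L, c, hLc⟩ := haff
  have hadd : ∀ A M : Matrix (Fin n) (Fin r) F, Φ (A + M) = Φ A + L M := by
    intro A M
    simp only [hLc, map_add]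
    abel
  suffices H : ∀ d (N : Matrix (Fin n) (Fin r) F),
      finrank F (LinearMap.ker N.mulVecLin) ≤ d → Φ N ∈ LinearMap.range N.mulVecLin from
    fun N => H _ N le_rfl
  intro d
  induction d with
  | zero =>
    intro N hN
    have hker : LinearMap.ker N.mulVecLin = ⊥ := by
      rw [← Submodule.finrank_eq_zero (R := F)]
      omega
    set P : Matrix (Fin n) (Fin (r + 1)) F :=
      Matrix.of fun (i : Fin n) (j : Fin (r + 1)) =>
        if h : (j : ℕ) < r then N i ⟨(j : ℕ), h⟩ else Φ N i with hP
    have hrkP : P.rank ≤ r := hrk N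
    have hle : LinearMap.range N.mulVecLin ≤ LinearMap.range P.mulVecLin := by
      rintro _ ⟨x, rfl⟩
      refine ⟨fun j => if h : (j : ℕ) < r then x ⟨(j : ℕ), h⟩ else 0, ?_⟩
      funext i
      simp only [Matrix.mulVecLin_apply, Matrix.mulVec, dotProduct]
      rw [Fin.sum_univ_castSucc]
      have hlast : ¬ ((Fin.last r : Fin (r + 1)) : ℕ) < r := by simp
      have hterm : ∀ j : Fin r,
          P i j.castSucc * (if h : ((j.castSucc : Fin (r+1)) : ℕ) < r then x ⟨_, h⟩ else 0)
            = N i j * x j := by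
        intro j
        have hj : ((j.castSucc : Fin (r+1)) : ℕ) < r := by
          simpa using j.isLt
        rw [dif_pos hj]
        have hPj : P i j.castSucc = N i j := by
          rw [hP]
          simp only [Matrix.of_apply]
          rw [dif_pos hj]
          congr 1
        rw [hPj]
        congr 1
      calc (∑ j : Fin r,
            P i j.castSucc * (if h : ((j.castSucc : Fin (r+1)) : ℕ) < r then x ⟨_, h⟩ else 0))
            + P i (Fin.last r) * (if h : ((Fin.last r : Fin (r+1)) : ℕ) < r then x ⟨_, h⟩ else 0)
          = ∑ j : Fin r, N i j * x j := by
            rw [dif_neg hlast, mul_zero, add_zero]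
            exact Finset.sum_congr rfl fun j _ => hterm j
        _ = N.mulVec x i := rfl
    have hmem : Φ N ∈ LinearMap.range P.mulVecLin := by
      refine ⟨Pi.single (Fin.last r) 1, ?_⟩
      funext i
      rw [Matrix.mulVecLin_apply, Matrix.mulVec_single]
      show P i (Fin.last r) * 1 = Φ N i
      have : P i (Fin.last r) = Φ N i := by
        rw [hP]
        simp only [Matrix.of_apply]
        rw [dif_neg (by simp)]
      rw [this, mul_one]
    have hfr : finrank F (LinearMap.range N.mulVecLin) = r := by
      have h1 := LinearMap.finrank_range_add_finrank_ker N.mulVecLin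
      rw [hker, finrank_bot, Module.finrank_fin_fun] at h1
      omega
    have heq : LinearMap.range N.mulVecLin = LinearMap.range P.mulVecLin := by
      apply Submodule.eq_of_le_of_finrank_le hle
      rw [hfr]
      exact hrkP
    rw [heq]
    exact hmem
  | succ d ih =>
    intro N hN
    by_cases hd : finrank F (LinearMap.ker N.mulVecLin) ≤ d
    · exact ih N hd
    push_neg at hd
    have hKne : LinearMap.ker N.mulVecLin ≠ ⊥ := by
      intro h
      rw [h, finrank_bot] at hd
      omega
    obtain ⟨q, hqK, hq0⟩ := Submodule.exists_mem_ne_zero_of_ne_bot hKne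
    have hTq : N.mulVecLin q = 0 := hqK
    have cnd : ∀ (u : Fin n → F) (f : (Fin r → F) →ₗ[F] F) (q' : Fin r → F),
        u ∉ LinearMap.range N.mulVecLin → N.mulVecLin q' = 0 → f q' = 1 →
        Φ N + L (mf u f) ∈ LinearMap.range N.mulVecLin ⊔ span F {u} := by
      intro u f q' hu hq' hfq'
      have hker : LinearMap.ker (N + mf u f).mulVecLin
          = LinearMap.ker N.mulVecLin ⊓ LinearMap.ker f := ker_add_mf N u f hu
      have hlt : LinearMap.ker (N + mf u f).mulVecLin < LinearMap.ker N.mulVecLin := by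
        rw [hker]
        refine lt_of_le_of_ne inf_le_left fun h => ?_
        have hq'mem : q' ∈ LinearMap.ker N.mulVecLin ⊓ LinearMap.ker f := by
          rw [h]
          exact hq'
        have : f q' = 0 := hq'mem.2
        rw [hfq'] at this
        exact one_ne_zero this
      have hfin : finrank F (LinearMap.ker (N + mf u f).mulVecLin) ≤ d := by
        have := Submodule.finrank_lt_finrank_of_lt hlt
        omega
      have hmem := ih _ hfin
      rwa [hadd, range_add_mf N u f q' hq' hfq'] at hmem
    by_cases hW : LinearMap.range N.mulVecLin = ⊥
    · -- the zero-range case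
      have hT0 : ∀ x, N.mulVecLin x = 0 := by
        intro x
        have hx : N.mulVecLin x ∈ LinearMap.range N.mulVecLin := ⟨x, rfl⟩
        rwa [hW, Submodule.mem_bot] at hx
      have hr1 : 1 ≤ r := by
        rcases Function.ne_iff.mp hq0 with ⟨j, -⟩
        exact j.pos
      rw [hW, Submodule.mem_bot]
      have cnd' : ∀ (u : Fin n → F) (f : (Fin r → F) →ₗ[F] F) (q' : Fin r → F),
          u ≠ 0 → f q' = 1 → Φ N + L (mf u f) ∈ span F {u} := by
        intro u f q' hu hfq'
        have := cnd u f q' (by rw [hW, Submodule.mem_bot]; exact hu) (hT0 q') hfq'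
        rwa [hW, bot_sup_eq] at this
      by_cases hr2 : 2 ≤ r
      · -- use two independent functionals
        apply eq_zero_of_mem_two_spans hn2
        intro u hu
        set j0 : Fin r := ⟨0, by omega⟩ with hj0
        set j1 : Fin r := ⟨1, by omega⟩ with hj1
        have hj01 : j1 ≠ j0 := by simp [hj0, hj1, Fin.ext_iff]
        set f1 : (Fin r → F) →ₗ[F] F := LinearMap.proj j0 with hf1
        set f2 : (Fin r → F) →ₗ[F] F := LinearMap.proj j1 with hf2
        have h1 := cnd' u f1 (Pi.single j0 1) hu (by simp [hf1])
        have h2 := cnd' u f2 (Pi.single j1 1) hu (by simp [hf2])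
        have h3 := cnd' u (f1 + f2) (Pi.single j0 1) hu (by
          simp [hf1, hf2, LinearMap.add_apply, Pi.single_eq_of_ne hj01])
        have hv : Φ N = (Φ N + L (mf u f1)) + (Φ N + L (mf u f2)) - (Φ N + L (mf u (f1 + f2))) := by
          rw [mf_add_right, map_add]
          abel
        rw [hv]
        exact sub_mem (add_mem h1 h2) h3
      · -- r = 1
        have hreq : r = 1 := by omega
        set j0 : Fin r := ⟨0, by omega⟩ with hj0
        set f0 : (Fin r → F) →ₗ[F] F := LinearMap.proj j0 with hf0
        have cnd0 : ∀ u : Fin n → F, u ≠ 0 → Φ N + L (mf u f0) ∈ span F {u} := by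
          intro u hu
          exact cnd' u f0 (Pi.single j0 1) hu (by simp [hf0])
        by_cases hF : ∀ t : F, t = 0 ∨ t = 1
        · -- |F| = 2, so n ≥ 3
          have hcard : Nat.card F = 2 := by
            rw [Nat.card_eq_two_iff]
            refine ⟨0, 1, zero_ne_one, ?_⟩
            apply Set.eq_univ_iff_forall.mpr
            intro t
            rcases hF t with h | h <;> simp [h]
          have hn3 : 3 ≤ n := by
            rcases Nat.lt_or_ge n 3 with h | h
            · exfalso
              exact hexc ⟨by omega, hreq, hcard⟩
            · exact h
          by_cases hv0 : Φ N = 0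
          · exact hv0
          exfalso
          obtain ⟨u₁, hu₁⟩ := exists_notMem_of_finrank_lt (span F {Φ N})
            (by rw [finrank_span_singleton hv0]; omega)
          obtain ⟨u₂, hu₂⟩ := exists_notMem_of_finrank_lt (span F {Φ N} ⊔ span F {u₁})
            (by
              have h1 := finrank_sup_span_le (span F {Φ N}) u₁
              rw [finrank_span_singleton hv0] at h1
              omega)
          have hu₁0 : u₁ ≠ 0 := fun h => hu₁ (h ▸ zero_mem _)
          have hu₂0 : u₂ ≠ 0 := fun h => hu₂ (h ▸ zero_mem _)
          have hu₁₂ : u₁ + u₂ ≠ 0 := by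
            intro h
            apply hu₂
            have h2 : u₂ = -u₁ := by
              have := congrArg (fun z => z - u₁) h
              simpa [sub_eq_iff_eq_add] using this
            rw [h2]
            exact neg_mem (Submodule.mem_sup_right (Submodule.mem_span_singleton_self u₁))
          obtain ⟨c₁, hc₁⟩ := Submodule.mem_span_singleton.mp (cnd0 u₁ hu₁0)
          obtain ⟨c₂, hc₂⟩ := Submodule.mem_span_singleton.mp (cnd0 u₂ hu₂0)
          obtain ⟨c₃, hc₃⟩ := Submodule.mem_span_singleton.mp (by
            have h3 := cnd0 (u₁ + u₂) hu₁₂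
            rwa [mf_add_left, map_add] at h3)
          have hveq : Φ N = (c₁ - c₃) • u₁ + (c₂ - c₃) • u₂ := by
            have hsum : c₁ • u₁ + c₂ • u₂ - c₃ • (u₁ + u₂) = Φ N := by
              rw [hc₁, hc₂, hc₃]
              abel
            rw [← hsum, smul_add, sub_smul, sub_smul]
            abel
          by_cases hc23 : c₂ - c₃ = 0
          · rw [hc23, zero_smul, add_zero] at hveq
            by_cases hc13 : c₁ - c₃ = 0
            · rw [hc13, zero_smul] at hveq
              exact hv0 hveq
            · apply hu₁
              have hu1v : u₁ = (c₁ - c₃)⁻¹ • Φ N := by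
                rw [hveq, smul_smul, inv_mul_cancel₀ hc13, one_smul]
              rw [hu1v]
              exact Submodule.smul_mem _ _ (Submodule.mem_span_singleton_self (Φ N))
          · apply hu₂
            have hu2v : u₂ = (c₂ - c₃)⁻¹ • (Φ N - (c₁ - c₃) • u₁) := by
              rw [hveq, add_sub_cancel_left, smul_smul, inv_mul_cancel₀ hc23, one_smul]
            rw [hu2v]
            exact Submodule.smul_mem _ _ (sub_mem
              (Submodule.mem_sup_left (Submodule.mem_span_singleton_self (Φ N)))
              (Submodule.mem_sup_right (Submodule.smul_mem _ _
                (Submodule.mem_span_singleton_self u₁))))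
        · -- some scalar t ∉ {0,1}
          push_neg at hF
          obtain ⟨t, ht0, ht1⟩ := hF
          apply eq_zero_of_mem_two_spans hn2
          intro u hu
          obtain ⟨c₁, hc₁⟩ := Submodule.mem_span_singleton.mp (cnd0 u hu)
          have h2 := cnd0 (t • u) (smul_ne_zero ht0 hu)
          rw [mf_smul_left, map_smul] at h2
          have hspan : span F {t • u} = span F {u} := by
            apply le_antisymm
            · rw [Submodule.span_le]
              intro y hy
              rw [Set.mem_singleton_iff] at hy
              rw [hy]
              exact Submodule.smul_mem _ _ (Submodule.mem_span_singleton_self u)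
            · rw [Submodule.span_le]
              intro y hy
              rw [Set.mem_singleton_iff] at hy
              rw [hy]
              have hmem : t⁻¹ • (t • u) ∈ span F {t • u} :=
                Submodule.smul_mem _ _ (Submodule.mem_span_singleton_self (t • u))
              rwa [smul_smul, inv_mul_cancel₀ ht0, one_smul] at hmem
          rw [hspan] at h2
          obtain ⟨c₂, hc₂⟩ := Submodule.mem_span_singleton.mp h2
          -- c₁ • u = Φ N + L (mf u f0), c₂ • u = Φ N + t • L (mf u f0)
          have hLm : L (mf u f0) = c₁ • u - Φ N := by
            rw [eq_sub_iff_add_eq, hc₁]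
            abel
          have hkey : (1 - t) • Φ N = (c₂ - t * c₁) • u := by
            rw [hLm, smul_sub, smul_smul] at hc₂
            rw [sub_smul, one_smul, sub_smul, hc₂]
            abel
          have hv : Φ N = (1 - t)⁻¹ • ((c₂ - t * c₁) • u) := by
            rw [← hkey, smul_smul, inv_mul_cancel₀ (sub_ne_zero.mpr (Ne.symm ht1)), one_smul]
          rw [hv]
          exact Submodule.smul_mem _ _ (Submodule.smul_mem _ _
            (Submodule.mem_span_singleton_self u))
    · -- the main case: range ≠ ⊥
      obtain ⟨a, haW, ha0⟩ := Submodule.exists_mem_ne_zero_of_ne_bot hW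
      obtain ⟨ka, hka⟩ := haW
      have haW' : a ∈ LinearMap.range N.mulVecLin := ⟨ka, hka⟩
      have hkaK : ka ∉ LinearMap.ker N.mulVecLin := by
        intro h
        apply ha0
        rw [← hka]
        exact h
      obtain ⟨χ, hχka, hχ0⟩ := exists_dual_annihilator (LinearMap.ker N.mulVecLin) ka hkaK
      have hqka : q ∉ span F {ka} := by
        intro h
        obtain ⟨t, ht⟩ := Submodule.mem_span_singleton.mp h
        by_cases ht0 : t = 0
        · apply hq0
          rw [← ht, ht0, zero_smul]
        · apply ha0
          rw [← hka]
          have hka' : ka = t⁻¹ • q := by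
            rw [← ht, smul_smul, inv_mul_cancel₀ ht0, one_smul]
          rw [hka', map_smul, hTq, smul_zero]
      obtain ⟨φ, hφq, hφ0⟩ := exists_dual_annihilator (span F {ka}) q hqka
      have hφka : φ ka = 0 := hφ0 ka (Submodule.mem_span_singleton_self ka)
      have hχq : χ q = 0 := hχ0 q hqK
      have hrankW : finrank F (LinearMap.range N.mulVecLin) + 2 ≤ n := by
        have h1 := LinearMap.finrank_range_add_finrank_ker N.mulVecLin
        rw [Module.finrank_fin_fun] at h1
        omega
      have cnd2 : ∀ b, b ∉ LinearMap.range N.mulVecLin →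
          Φ N + (L (mf a φ) + L (mf b χ)) ∈ LinearMap.range N.mulVecLin ⊔ span F {b} := by
        intro b hb
        have hker := ker_add_mf2 N hka hb hχka hχ0 (φ := φ)
        have hlt : LinearMap.ker (N + (mf a φ + mf b χ)).mulVecLin
            < LinearMap.ker N.mulVecLin := by
          rw [hker]
          refine lt_of_le_of_ne inf_le_left fun h => ?_
          have hqmem : q ∈ LinearMap.ker N.mulVecLin ⊓ LinearMap.ker φ := by
            rw [h]
            exact hqK
          have : φ q = 0 := hqmem.2
          rw [hφq] at this
          exact one_ne_zero this
        have hfin : finrank F (LinearMap.ker (N + (mf a φ + mf b χ)).mulVecLin) ≤ d := by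
          have := Submodule.finrank_lt_finrank_of_lt hlt
          omega
        have hmem := ih _ hfin
        rw [hadd, map_add] at hmem
        rwa [range_add_mf2 N hka hTq hφq hφka hχka hχq] at hmem
      have hLa : L (mf a φ) ∈ LinearMap.range N.mulVecLin := by
        apply codim2_mem hrankW
        intro u hu
        have h1 := cnd u φ q hu hTq hφq
        have h2 := cnd (u + a) φ q (by
          intro h
          apply hu
          have := sub_mem h haW'
          simpa using this) hTq hφq
        have hsup : LinearMap.range N.mulVecLin ⊔ span F {u + a}
            = LinearMap.range N.mulVecLin ⊔ span F {u} := by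
          apply le_antisymm
          · apply sup_le le_sup_left
            rw [Submodule.span_le]
            intro y hy
            rw [Set.mem_singleton_iff] at hy
            rw [hy]
            exact add_mem (Submodule.mem_sup_right (Submodule.mem_span_singleton_self u))
              (Submodule.mem_sup_left haW')
          · apply sup_le le_sup_left
            rw [Submodule.span_le]
            intro y hy
            rw [Set.mem_singleton_iff] at hy
            rw [hy]
            have hmem3 : (u + a) - a
                ∈ LinearMap.range N.mulVecLin ⊔ span F {u + a} :=
              sub_mem (Submodule.mem_sup_right (Submodule.mem_span_singleton_self (u + a)))
                (Submodule.mem_sup_left haW')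
            rwa [show (u + a) - a = u by abel] at hmem3
        rw [hsup] at h2
        have h3 := sub_mem h2 h1
        have heq : (Φ N + L (mf (u + a) φ)) - (Φ N + L (mf u φ)) = L (mf a φ) := by
          rw [mf_add_left, map_add]
          abel
        rwa [heq] at h3
      have hz : Φ N + L (mf a φ) ∈ LinearMap.range N.mulVecLin := by
        apply codim2_mem hrankW
        intro b hb
        have hF1 := cnd b φ q hb hTq hφq
        have hF2 := cnd b (φ + χ) q hb hTq (by
          rw [LinearMap.add_apply, hφq, hχq, add_zero])
        have hF3 : L (mf b χ) ∈ LinearMap.range N.mulVecLin ⊔ span F {b} := by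
          have h3 := sub_mem hF2 hF1
          have heq : (Φ N + L (mf b (φ + χ))) - (Φ N + L (mf b φ)) = L (mf b χ) := by
            rw [mf_add_right, map_add]
            abel
          rwa [heq] at h3
        have hF4 := cnd2 b hb
        have h5 := sub_mem hF4 hF3
        have heq : (Φ N + (L (mf a φ) + L (mf b χ))) - L (mf b χ) = Φ N + L (mf a φ) := by
          abel
        rwa [heq] at h5
      have hfinal := sub_mem hz hLa
      have heq : (Φ N + L (mf a φ)) - L (mf a φ) = Φ N := by abel
      rwa [heq] at hfinal
end
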